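/- For every integer ℓ ≥ 1, let Q = v₁…v_q be an induced path of G_ℓ such that v₁ is an endpoint of the top edge of K^s for some source s of B_ℓ. If s is Q-special, then V(Q) ⊆ V(G_ℓ(s)) \ pred(s). -/

import Mathlib

namespace PaperDefs

/-- `v : Fin n → V` is a path of order `n` in `G`: distinct vertices,
consecutive ones adjacent. -/
def IsPathSeq {V : Type*} (G : SimpleGraph V) {n : ℕ} (v : Fin n → V) : Prop :=
  Function.Injective v ∧ ∀ i j : Fin n, (j : ℕ) = (i : ℕ) + 1 → G.Adj (v i) (v j)

/-- `v : Fin n → V` is an induced path of order `n` in `G`: a path with no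
edge between vertices at distance ≥ 2 along the path. -/
def IsInducedPathSeq {V : Type*} (G : SimpleGraph V) {n : ℕ} (v : Fin n → V) : Prop :=
  IsPathSeq G v ∧ ∀ i j : Fin n, (i : ℕ) + 1 < (j : ℕ) → ¬ G.Adj (v i) (v j)

/-- `G` is `k`-degenerate: every nonempty (induced) subgraph has a vertex of
degree at most `k`. -/
def KDeg {V : Type*} (G : SimpleGraph V) (k : ℕ) : Prop :=
  ∀ s : Set V, s.Nonempty → ∃ v ∈ s, {u | u ∈ s ∧ G.Adj v u}.ncard ≤ k

/-- `G` has a Hamiltonian path. -/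
def HamPath {V : Type*} [Fintype V] (G : SimpleGraph V) : Prop :=
  ∃ v : Fin (Fintype.card V) → V, Function.Bijective v ∧
    ∀ i j : Fin (Fintype.card V), (j : ℕ) = (i : ℕ) + 1 → G.Adj (v i) (v j)

/-- `y` is `r`-reachable from `x` w.r.t. the vertex ordering given by the
injection `f : V → ℕ`. -/
def RReach {V : Type*} (G : SimpleGraph V) (f : V → ℕ) (r : ℕ) (x y : V) : Prop :=
  f y < f x ∧ ∃ w : G.Walk x y, w.IsPath ∧ w.length ≤ r ∧
    ∀ z ∈ w.support, z ≠ x → z ≠ y → f x < f z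

/-- `col_r(G) ≤ k`: some linear order on the vertices witnesses that at most `k`
vertices are `r`-reachable from every vertex. -/
def ColAtMost {V : Type*} (G : SimpleGraph V) (r k : ℕ) : Prop :=
  ∃ f : V → ℕ, Function.Injective f ∧ ∀ x : V, {y | RReach G f r x y}.ncard ≤ k

end PaperDefs
namespace PaperDefs

/-- The function `h` with `h 1 = 3` and `h (ℓ+1) = 2 + 2 * h ℓ`
(equivalently `h ℓ = 5·2^(ℓ-1) - 2` for `ℓ ≥ 1`). -/
def h : ℕ → ℕ
  | 0 => 0
  | 1 => 3
  | n + 2 => 2 + 2 * h (n + 1)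

/-- Shift a set of pairs of integers by `i`. -/
def shift (X : Set (ℕ × ℕ)) (i : ℕ) : Set (ℕ × ℕ) := (fun q => (q.1 + i, q.2 + i)) '' X

/-- The nested interval system `N_ℓ`. -/
def Nset : ℕ → Set (ℕ × ℕ)
  | 0 => ∅
  | 1 => {(1, 3)}
  | ℓ + 2 => {(1, h (ℓ + 2))} ∪ shift (Nset (ℓ + 1)) 1 ∪ shift (Nset (ℓ + 1)) (h (ℓ + 1) + 1)

/-- Nodes of the complete binary tree of depth `p`, heap-indexed by
`1, …, 2^p - 1` (node `i` has children `2i` and `2i+1`). -/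
def isNode (p i : ℕ) : Prop := 1 ≤ i ∧ i < 2 ^ p

/-- Adjacency in the complete binary tree of depth `p` (heap indexing). -/
def treeAdj (p s t : ℕ) : Prop := isNode p s ∧ isNode p t ∧ (s = t / 2 ∨ t = s / 2)

/-- The depth of node `i` (the root `1` has depth `1`). -/
def nodeDepth (i : ℕ) : ℕ := Nat.log 2 i + 1

/-- `s ⪯ t` : `s` is an ancestor of `t` (heap indexing). -/
def anc (s t : ℕ) : Prop := ∃ k, t / 2 ^ k = s

/-- `s ≺ t` : `s` is a strict ancestor of `t` (heap indexing). -/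
def strictAnc (s t : ℕ) : Prop := ∃ k, 1 ≤ k ∧ t / 2 ^ k = s

/-- The nodes of the complete binary tree of depth `p`. -/
abbrev TNode (p : ℕ) := {i : Fin (2 ^ p) // 1 ≤ (i : ℕ)}

/-- The non-root nodes of the complete binary tree of depth `p`. -/
abbrev NRNode (p : ℕ) := {i : Fin (2 ^ p) // 2 ≤ (i : ℕ)}

/-- Vertices of a blow-up of the complete binary tree of depth `p`:
for every node `s` a clique `K^s` on 3 vertices (`Sum.inl (s, i)`),
and for every non-root node `t` the four subdivision vertices
`pred t = {x₁, y₁, x₂, y₂}` (`Sum.inr (t, j)` with `j = 0, 1, 2, 3`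
standing for `x₁, y₁, x₂, y₂`; so `tpred t = {0, 2}` and `bpred t = {1, 3}`). -/
abbrev BV (p : ℕ) := (TNode p × Fin 3) ⊕ (NRNode p × Fin 4)

/-- The projection `π` mapping a vertex of the blow-up to (the heap index of)
the node of the tree it originates from. -/
def πn {p : ℕ} : BV p → ℕ
  | Sum.inl (s, _) => (s.1 : ℕ)
  | Sum.inr (t, _) => (t.1 : ℕ)

/-- The depth of a vertex of the blow-up. -/
def vDepth {p : ℕ} (u : BV p) : ℕ := nodeDepth (πn u)

/-- Edges of the triangle `K^s` (on vertex set `Fin 3`) are identified with the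
vertex they miss; `other k b` enumerates (as `b` ranges over `Bool`) the two
endpoints of the edge `k`. -/
def other (k : Fin 3) (b : Bool) : Fin 3 := k + (if b then 1 else 2)

/-- The arbitrary choices made when constructing a blow-up of the complete binary
tree of depth `p`: the injections `μ_s` from the neighbors of `s` to the edges of
`K^s` (an edge of `K^s` being encoded by the vertex of `Fin 3` it misses), the
choices `ε` of labelings of the endpoints of the edges `μ_s t`, and the top (root)
edge of the root clique, which must be outside the image of `μ` at the root. -/
structure BUChoices (p : ℕ) where
  μ : ℕ → ℕ → Fin 3
  ε : ℕ → ℕ → Bool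
  rootTop : Fin 3
  μ_inj : ∀ s t t', treeAdj p s t → treeAdj p s t' → μ s t = μ s t' → t = t'
  rootTop_spec : ∀ t, treeAdj p 1 t → μ 1 t ≠ rootTop

/-- The (encoding of the) top edge of the clique `K^s`. -/
def topIdx {p : ℕ} (C : BUChoices p) (s : ℕ) : Fin 3 :=
  if s = 1 then C.rootTop else C.μ s (s / 2)

/-- The base relation of the blow-up: clique edges inside each `K^s`, and for every
non-root node `t` with parent `s` the two paths
`L(s,t) = u₁ x₁ y₁ v₁` and `R(s,t) = u₂ x₂ y₂ v₂`, where `u₁, u₂` are the endpoints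
of `μ_s t` and `v₁, v₂` those of `μ_t s` (as labeled by `ε`). -/
def buRel {p : ℕ} (C : BUChoices p) : BV p → BV p → Prop
  | Sum.inl (s, i), Sum.inl (s', j) => s = s' ∧ i ≠ j
  | Sum.inl (s, i), Sum.inr (t, j) =>
      ((s.1 : ℕ) = (t.1 : ℕ) / 2 ∧
        ((j = 0 ∧ i = other (C.μ (s.1 : ℕ) (t.1 : ℕ)) (C.ε (s.1 : ℕ) (t.1 : ℕ))) ∨
         (j = 2 ∧ i = other (C.μ (s.1 : ℕ) (t.1 : ℕ)) (! C.ε (s.1 : ℕ) (t.1 : ℕ))))) ∨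
      ((s.1 : ℕ) = (t.1 : ℕ) ∧
        ((j = 1 ∧ i = other (C.μ (t.1 : ℕ) ((t.1 : ℕ) / 2)) (C.ε (t.1 : ℕ) ((t.1 : ℕ) / 2))) ∨
         (j = 3 ∧ i = other (C.μ (t.1 : ℕ) ((t.1 : ℕ) / 2)) (! C.ε (t.1 : ℕ) ((t.1 : ℕ) / 2)))))
  | Sum.inr (t, j), Sum.inr (t', j') => t = t' ∧ ((j = 0 ∧ j' = 1) ∨ (j = 2 ∧ j' = 3))
  | Sum.inr _, Sum.inl _ => False

/-- The blow-up of the complete binary tree of depth `p`, for the choices `C`. -/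
def blowup {p : ℕ} (C : BUChoices p) : SimpleGraph (BV p) := SimpleGraph.fromRel (buRel C)

/-- A vertex incident with the root edge of the blow-up. -/
def isRootEnd {p : ℕ} (C : BUChoices p) (u : BV p) : Prop :=
  ∃ s x, u = Sum.inl (s, x) ∧ (s.1 : ℕ) = 1 ∧ x ≠ C.rootTop

/-- The arbitrary choices made when constructing `G_ℓ`: those of the underlying
blow-up of `B_ℓ` (the complete binary tree of depth `h ℓ`) together with, for every
pair `s ≺ t`, the labeling `ρ` of the endpoints `u₁, u₂` of the top edge of `K^s`
used for the ribs towards `pred t`. -/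
structure GChoices (ℓ : ℕ) extends BUChoices (h ℓ) where
  ρ : ℕ → ℕ → Bool

/-- The rib edges: for `s ≺ t` with `(depth s, depth t) ∈ N_ℓ`, the edges
`u₁x₁, u₁x₂, u₂y₁, u₂y₂` where `u₁u₂` is the top edge of `K^s`. -/
def ribRel {ℓ : ℕ} (C : GChoices ℓ) : BV (h ℓ) → BV (h ℓ) → Prop
  | Sum.inl (s, i), Sum.inr (t, j) =>
      strictAnc (s.1 : ℕ) (t.1 : ℕ) ∧ (nodeDepth (s.1 : ℕ), nodeDepth (t.1 : ℕ)) ∈ Nset ℓ ∧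
      (((j = 0 ∨ j = 2) ∧ i = other (topIdx C.toBUChoices (s.1 : ℕ)) (C.ρ (s.1 : ℕ) (t.1 : ℕ))) ∨
       ((j = 1 ∨ j = 3) ∧ i = other (topIdx C.toBUChoices (s.1 : ℕ)) (! C.ρ (s.1 : ℕ) (t.1 : ℕ))))
  | _, _ => False

/-- The graph `G_ℓ`: the blow-up `H_ℓ` of `B_ℓ` together with the ribs. -/
def Gl {ℓ : ℕ} (C : GChoices ℓ) : SimpleGraph (BV (h ℓ)) :=
  SimpleGraph.fromRel (fun u v => buRel C.toBUChoices u v ∨ ribRel C u v)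

/-- `s` is a source of `B_ℓ` of rank `a`. -/
def IsSourceOfRank (ℓ s a : ℕ) : Prop :=
  isNode (h ℓ) s ∧ 1 ≤ a ∧ a ≤ ℓ ∧ (nodeDepth s, nodeDepth s + h a - 1) ∈ Nset ℓ

/-- `s` is a source of `B_ℓ`. -/
def IsSource (ℓ s : ℕ) : Prop := isNode (h ℓ) s ∧ ∃ j, (nodeDepth s, j) ∈ Nset ℓ

/-- `t` is an internal node of `B_ℓ(s)`, for `s` a source of rank `a`. -/
def InternalNode (ℓ s a t : ℕ) : Prop :=
  strictAnc s t ∧ nodeDepth t < nodeDepth s + h a - 1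

/-- `t` is a node of the subtree `B_ℓ(s)`, for `s` a source of rank `a`. -/
def SubtreeNode (ℓ s a t : ℕ) : Prop :=
  anc s t ∧ nodeDepth t ≤ nodeDepth s + h a - 1

/-- The set of ranks of sources `s` such that `t` is an internal node of `B_ℓ(s)`. -/
def tauSet (ℓ t : ℕ) : Set ℕ := {a | ∃ s, IsSourceOfRank ℓ s a ∧ InternalNode ℓ s a t}

/-- `τ(u)`: the minimum rank of a source `s` such that `π(u)` is an internal node of
`B_ℓ(s)`, and `ℓ + 1` if there is no such source. -/
noncomputable def tau (ℓ : ℕ) (u : BV (h ℓ)) : ℕ := by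
  classical
  exact if (tauSet ℓ (πn u)).Nonempty then sInf (tauSet ℓ (πn u)) else ℓ + 1

/-- `u` is a vertex incident with the top edge of the clique `K^s`. -/
def TopEdgeVert {ℓ : ℕ} (C : GChoices ℓ) (s : ℕ) (u : BV (h ℓ)) : Prop :=
  ∃ sn x, u = Sum.inl (sn, x) ∧ (sn.1 : ℕ) = s ∧ x ≠ topIdx C.toBUChoices s

/-- `u ∈ pred s`. -/
def InPred {p : ℕ} (s : ℕ) (u : BV p) : Prop := ∃ t j, u = Sum.inr (t, j) ∧ (t.1 : ℕ) = s

/-- `u` and `w` lie in a common clique `K^s`. -/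
def CliquePair {p : ℕ} (u w : BV p) : Prop :=
  ∃ s i j, u = Sum.inl (s, i) ∧ w = Sum.inl (s, j)

/-- `uw` is a tree edge of `G_ℓ`: an edge of the blow-up `H_ℓ` that is not a
clique edge. -/
def IsTreeEdge {ℓ : ℕ} (C : GChoices ℓ) (u w : BV (h ℓ)) : Prop :=
  (blowup C.toBUChoices).Adj u w ∧ ¬ CliquePair u w

/-- The source `s` is `Q`-special for the induced path `Q = v`. -/
def QSpecial {ℓ q : ℕ} (C : GChoices ℓ) (v : Fin q → BV (h ℓ)) (s : ℕ) : Prop :=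
  ∃ a, IsSourceOfRank ℓ s a ∧ (∃ i, TopEdgeVert C s (v i)) ∧
    ∃ j, InternalNode ℓ s a (πn (v j))

end PaperDefs
namespace PaperDefs

-- ### h lemmas

lemma three_le_h : ∀ a, 1 ≤ a → 3 ≤ h a
  | 1, _ => le_refl 3
  | (n+2), _ => by
      have := three_le_h (n+1) (Nat.le_add_left 1 n)
      show 3 ≤ 2 + 2 * h (n+1)
      omega

-- ### Nset lemmas

lemma mem_Nset_succ {ℓ i j : ℕ} : (i,j) ∈ Nset (ℓ+2) ↔
    (i = 1 ∧ j = h (ℓ+2)) ∨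
    (∃ i' j', (i',j') ∈ Nset (ℓ+1) ∧ i = i'+1 ∧ j = j'+1) ∨
    (∃ i' j', (i',j') ∈ Nset (ℓ+1) ∧ i = i' + (h (ℓ+1)+1) ∧ j = j' + (h (ℓ+1)+1)) := by
  show (i,j) ∈ ({(1, h (ℓ + 2))} ∪ shift (Nset (ℓ + 1)) 1 ∪ shift (Nset (ℓ + 1)) (h (ℓ + 1) + 1) : Set (ℕ × ℕ)) ↔ _
  simp only [Set.mem_union, Set.mem_singleton_iff, shift, Set.mem_image, Prod.mk.injEq,
    Prod.ext_iff]
  constructor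
  · rintro ((⟨rfl, rfl⟩ | ⟨⟨a,b⟩, hab, ha, hb⟩) | ⟨⟨a,b⟩, hab, ha, hb⟩)
    · exact Or.inl ⟨rfl, rfl⟩
    · exact Or.inr (Or.inl ⟨a, b, hab, ha.symm, hb.symm⟩)
    · exact Or.inr (Or.inr ⟨a, b, hab, ha.symm, hb.symm⟩)
  · rintro (⟨rfl, rfl⟩ | ⟨a, b, hab, rfl, rfl⟩ | ⟨a, b, hab, rfl, rfl⟩)
    · exact Or.inl (Or.inl ⟨rfl, rfl⟩)
    · exact Or.inl (Or.inr ⟨⟨a,b⟩, hab, rfl, rfl⟩)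
    · exact Or.inr ⟨⟨a,b⟩, hab, rfl, rfl⟩

lemma Nset_bounds : ∀ ℓ i j, (i,j) ∈ Nset ℓ → 1 ≤ i ∧ i + 2 ≤ j ∧ j ≤ h ℓ
  | 0, i, j => by intro hij; exact absurd hij (by simp [Nset])
  | 1, i, j => by
      intro hij
      have : (i, j) = (1, 3) := hij
      simp [h] at this ⊢; omega
  | (n+2), i, j => by
      intro hij
      have hh := three_le_h (n+1) (Nat.le_add_left 1 n)
      have hH : h (n+2) = 2 + 2 * h (n+1) := rfl
      rcases mem_Nset_succ.1 hij with ⟨rfl, rfl⟩ | ⟨a, b, hab, rfl, rfl⟩ | ⟨a, b, hab, rfl, rfl⟩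
      · omega
      · have := Nset_bounds (n+1) a b hab; omega
      · have := Nset_bounds (n+1) a b hab; omega

lemma Nset_left_unique : ∀ ℓ i j j', (i,j) ∈ Nset ℓ → (i,j') ∈ Nset ℓ → j = j'
  | 0, i, j, j' => by intro hij; exact absurd hij (by simp [Nset])
  | 1, i, j, j' => by
      intro h1 h2
      have e1 : (i, j) = (1, 3) := h1
      have e2 : (i, j') = (1, 3) := h2
      simp at e1 e2; omega
  | (n+2), i, j, j' => by
      intro h1 h2
      have hh := three_le_h (n+1) (Nat.le_add_left 1 n)
      rcases mem_Nset_succ.1 h1 with ⟨rfl, rfl⟩ | ⟨a, b, hab, rfl, rfl⟩ | ⟨a, b, hab, rfl, rfl⟩ <;>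
        rcases mem_Nset_succ.1 h2 with ⟨e1, rfl⟩ | ⟨a', b', hab', e1, rfl⟩ | ⟨a', b', hab', e1, rfl⟩
      all_goals (try (have B1 := Nset_bounds (n+1) _ _ hab)) <;>
        (try (have B2 := Nset_bounds (n+1) _ _ hab'))
      · rfl
      · omega
      · omega
      · omega
      · have : a = a' := by omega
        subst this
        have := Nset_left_unique (n+1) a b b' hab hab'; omega
      · omega
      · omega
      · omega
      · have : a = a' := by omega
        subst this
        have := Nset_left_unique (n+1) a b b' hab hab'; omega

lemma Nset_right_unique : ∀ ℓ i i' j, (i,j) ∈ Nset ℓ → (i',j) ∈ Nset ℓ → i = i'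
  | 0, i, i', j => by intro hij; exact absurd hij (by simp [Nset])
  | 1, i, i', j => by
      intro h1 h2
      have e1 : (i, j) = (1, 3) := h1
      have e2 : (i', j) = (1, 3) := h2
      simp at e1 e2; omega
  | (n+2), i, i', j => by
      intro h1 h2
      have hh := three_le_h (n+1) (Nat.le_add_left 1 n)
      have hH : h (n+2) = 2 + 2 * h (n+1) := rfl
      rcases mem_Nset_succ.1 h1 with ⟨rfl, rfl⟩ | ⟨a, b, hab, rfl, rfl⟩ | ⟨a, b, hab, rfl, rfl⟩ <;>
        rcases mem_Nset_succ.1 h2 with ⟨rfl, e1⟩ | ⟨a', b', hab', rfl, e1⟩ | ⟨a', b', hab', rfl, e1⟩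
      all_goals (try (have B1 := Nset_bounds (n+1) _ _ hab)) <;>
        (try (have B2 := Nset_bounds (n+1) _ _ hab'))
      · rfl
      · omega
      · omega
      · omega
      · have : b = b' := by omega
        subst this
        have := Nset_right_unique (n+1) a a' b hab hab'; omega
      · omega
      · omega
      · omega
      · have : b = b' := by omega
        subst this
        have := Nset_right_unique (n+1) a a' b hab hab'; omega

lemma Nset_left_ne_right : ∀ ℓ i j i' j', (i,j) ∈ Nset ℓ → (i',j') ∈ Nset ℓ → i' ≠ j
  | 0, i, j, i', j' => by intro hij; exact absurd hij (by simp [Nset])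
  | 1, i, j, i', j' => by
      intro h1 h2
      have e1 : (i, j) = (1, 3) := h1
      have e2 : (i', j') = (1, 3) := h2
      simp at e1 e2; omega
  | (n+2), i, j, i', j' => by
      intro h1 h2
      have hh := three_le_h (n+1) (Nat.le_add_left 1 n)
      have hH : h (n+2) = 2 + 2 * h (n+1) := rfl
      rcases mem_Nset_succ.1 h1 with ⟨rfl, rfl⟩ | ⟨a, b, hab, rfl, rfl⟩ | ⟨a, b, hab, rfl, rfl⟩ <;>
        rcases mem_Nset_succ.1 h2 with ⟨rfl, rfl⟩ | ⟨a', b', hab', rfl, rfl⟩ | ⟨a', b', hab', rfl, rfl⟩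
      all_goals (try (have B1 := Nset_bounds (n+1) _ _ hab)) <;>
        (try (have B2 := Nset_bounds (n+1) _ _ hab'))
      · omega
      · omega
      · omega
      · omega
      · have := Nset_left_ne_right (n+1) a b a' b' hab hab'; omega
      · omega
      · omega
      · omega
      · have := Nset_left_ne_right (n+1) a b a' b' hab hab'; omega

lemma Nset_laminar : ∀ ℓ i j i' j', (i,j) ∈ Nset ℓ → (i',j') ∈ Nset ℓ →
    i ≤ i' → i' ≤ j → j' ≤ j
  | 0, i, j, i', j' => by intro hij; exact absurd hij (by simp [Nset])
  | 1, i, j, i', j' => by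
      intro h1 h2
      have e1 : (i, j) = (1, 3) := h1
      have e2 : (i', j') = (1, 3) := h2
      simp at e1 e2; omega
  | (n+2), i, j, i', j' => by
      intro h1 h2 hle1 hle2
      have hh := three_le_h (n+1) (Nat.le_add_left 1 n)
      have hH : h (n+2) = 2 + 2 * h (n+1) := rfl
      rcases mem_Nset_succ.1 h1 with ⟨rfl, rfl⟩ | ⟨a, b, hab, rfl, rfl⟩ | ⟨a, b, hab, rfl, rfl⟩ <;>
        rcases mem_Nset_succ.1 h2 with ⟨rfl, rfl⟩ | ⟨a', b', hab', rfl, rfl⟩ | ⟨a', b', hab', rfl, rfl⟩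
      all_goals (try (have B1 := Nset_bounds (n+1) _ _ hab)) <;>
        (try (have B2 := Nset_bounds (n+1) _ _ hab'))
      · omega
      · omega
      · omega
      · omega
      · have := Nset_laminar (n+1) a b a' b' hab hab' (by omega) (by omega); omega
      · omega
      · omega
      · omega
      · have := Nset_laminar (n+1) a b a' b' hab hab' (by omega) (by omega); omega

-- ### heap lemmas

lemma nodeDepth_parent {n : ℕ} (hn : 2 ≤ n) : nodeDepth (n / 2) + 1 = nodeDepth n := by
  have h1 := Nat.log_div_base 2 n
  have h2 : 0 < Nat.log 2 n := Nat.log_pos one_lt_two hn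
  unfold nodeDepth; omega

lemma nodeDepth_div_pow {t : ℕ} : ∀ k, 1 ≤ t / 2 ^ k → nodeDepth (t / 2 ^ k) + k = nodeDepth t
  | 0, _ => by simp
  | (k+1), hk => by
      have hd : t / 2 ^ (k+1) = (t / 2 ^ k) / 2 := by
        rw [Nat.div_div_eq_div_mul, ← pow_succ]
      rw [hd] at hk ⊢
      have h2 : 2 ≤ t / 2 ^ k := by
        by_contra hcon
        interval_cases ht : t / 2 ^ k <;> simp_all
      have := nodeDepth_parent h2
      have := nodeDepth_div_pow (t := t) k (by omega)
      omega

lemma one_le_nodeDepth (n : ℕ) : 1 ≤ nodeDepth n := Nat.le_add_left 1 _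

lemma anc_refl (s : ℕ) : anc s s := ⟨0, by simp⟩

lemma anc_depth_le {s t : ℕ} (hst : anc s t) (hs : 1 ≤ s) : nodeDepth s ≤ nodeDepth t := by
  obtain ⟨k, hk⟩ := hst
  have := nodeDepth_div_pow (t := t) k (hk ▸ hs)
  rw [hk] at this
  omega

lemma strictAnc_depth_lt {s t : ℕ} (hst : strictAnc s t) (hs : 1 ≤ s) :
    nodeDepth s < nodeDepth t := by
  obtain ⟨k, hk1, hk⟩ := hst
  have := nodeDepth_div_pow (t := t) k (hk ▸ hs)
  rw [hk] at this
  have := one_le_nodeDepth s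
  omega

lemma anc_of_strictAnc {s t : ℕ} (hst : strictAnc s t) : anc s t := ⟨hst.choose, hst.choose_spec.2⟩

lemma strictAnc_of_anc_ne {s t : ℕ} (hst : anc s t) (hne : s ≠ t) : strictAnc s t := by
  obtain ⟨k, hk⟩ := hst
  rcases Nat.eq_zero_or_pos k with rfl | hpos
  · simp at hk; exact absurd hk.symm hne
  · exact ⟨k, hpos, hk⟩

lemma anc_unique_of_depth {x y t : ℕ} (hx : anc x t) (hy : anc y t)
    (h1x : 1 ≤ x) (h1y : 1 ≤ y) (hd : nodeDepth x = nodeDepth y) : x = y := by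
  obtain ⟨k, hk⟩ := hx
  obtain ⟨m, hm⟩ := hy
  have e1 := nodeDepth_div_pow (t := t) k (hk ▸ h1x)
  have e2 := nodeDepth_div_pow (t := t) m (hm ▸ h1y)
  rw [hk] at e1; rw [hm] at e2
  have : k = m := by omega
  subst this; rw [← hk, ← hm]

lemma one_le_of_anc {s t : ℕ} (hst : anc s t) (hs : 1 ≤ s) : 1 ≤ t := by
  obtain ⟨k, hk⟩ := hst
  have : 1 ≤ t / 2 ^ k := hk ▸ hs
  have := Nat.div_le_self t (2 ^ k)
  omega

lemma anc_eq_of_depth_eq {s t : ℕ} (hst : anc s t) (hs : 1 ≤ s)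
    (hd : nodeDepth s = nodeDepth t) : s = t :=
  anc_unique_of_depth hst (anc_refl t) hs (one_le_of_anc hst hs) hd

lemma anc_trans {s t u : ℕ} (h1 : anc s t) (h2 : anc t u) : anc s u := by
  obtain ⟨k, hk⟩ := h1
  obtain ⟨m, hm⟩ := h2
  exact ⟨m + k, by rw [pow_add, ← Nat.div_div_eq_div_mul, hm, hk]⟩

lemma anc_parent_of_strict {s t : ℕ} (hst : strictAnc s t) : anc s (t / 2) := by
  obtain ⟨k, hk1, hk⟩ := hst
  refine ⟨k - 1, ?_⟩
  rw [Nat.div_div_eq_div_mul]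
  rw [show 2 * 2 ^ (k-1) = 2 ^ k by rw [← pow_succ']; congr 1; omega]
  exact hk

lemma anc_child {s p c : ℕ} (hsp : anc s p) (hc : p = c / 2) : anc s c := by
  obtain ⟨k, hk⟩ := hsp
  refine ⟨k + 1, ?_⟩
  rw [pow_succ', ← Nat.div_div_eq_div_mul, ← hc, hk]

lemma anc_comparable {x y t : ℕ} (hx : anc x t) (hy : anc y t) : anc x y ∨ anc y x := by
  obtain ⟨k, hk⟩ := hx
  obtain ⟨m, hm⟩ := hy
  rcases le_total k m with hle | hle
  · right
    refine ⟨m - k, ?_⟩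
    rw [← hk, Nat.div_div_eq_div_mul, ← pow_add, show k + (m-k) = m by omega, hm]
  · left
    refine ⟨k - m, ?_⟩
    rw [← hm, Nat.div_div_eq_div_mul, ← pow_add, show m + (k-m) = k by omega, hk]

lemma anc_one {t : ℕ} (ht : 1 ≤ t) : anc 1 t := by
  refine ⟨Nat.log 2 t, ?_⟩
  have h1 : 2 ^ Nat.log 2 t ≤ t := Nat.pow_log_le_self 2 (by omega)
  have h2 : t < 2 ^ (Nat.log 2 t + 1) := Nat.lt_pow_succ_log_self one_lt_two t
  rw [pow_succ] at h2
  exact Nat.div_eq_of_lt_le (by omega) (by omega)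

lemma nodeDepth_le_of_lt_pow {t p : ℕ} (h1 : 1 ≤ t) (h2 : t < 2 ^ p) : nodeDepth t ≤ p := by
  have := Nat.log_lt_of_lt_pow (show t ≠ 0 by omega) h2
  unfold nodeDepth; omega

lemma two_le_of_strictAnc {s t : ℕ} (hst : strictAnc s t) (hs : 1 ≤ s) : 2 ≤ t := by
  obtain ⟨k, hk1, hk⟩ := hst
  have h2 : 2 ^ k ≤ t := (Nat.one_le_div_iff (by positivity : 0 < 2 ^ k)).1 (hk ▸ hs)
  have : 2 ^ 1 ≤ 2 ^ k := Nat.pow_le_pow_right (by norm_num) hk1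
  omega


-- ### Fin helpers

lemma other_ne : ∀ (k : Fin 3) (b : Bool), other k b ≠ k := by decide

lemma eq_other_of_ne : ∀ {x e : Fin 3}, x ≠ e → x = other e true ∨ x = other e false := by decide

lemma other_true_ne_false : ∀ (e : Fin 3), other e true ≠ other e false := by decide

lemma tnode_ext {p : ℕ} {a b : TNode p} (hv : (a.1 : ℕ) = (b.1 : ℕ)) : a = b :=
  Subtype.ext (Fin.val_injective hv)

lemma nrnode_ext {p : ℕ} {a b : NRNode p} (hv : (a.1 : ℕ) = (b.1 : ℕ)) : a = b :=
  Subtype.ext (Fin.val_injective hv)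

lemma topIdx_eq {p : ℕ} (B : BUChoices p) {s : ℕ} (hs2 : 2 ≤ s) :
    topIdx B s = B.μ s (s / 2) := by
  unfold topIdx; rw [if_neg (by omega)]

lemma not_inPred_inl {p s : ℕ} (sn : TNode p × Fin 3) : ¬ InPred s (Sum.inl sn : BV p) := by
  rintro ⟨t, j, habs, -⟩; simp at habs

lemma inPred_inr_iff {p s : ℕ} (tn : NRNode p) (j : Fin 4) :
    InPred s (Sum.inr (tn, j) : BV p) ↔ (tn.1 : ℕ) = s := by
  constructor
  · rintro ⟨t', j', heq, ht⟩
    obtain ⟨rfl, rfl⟩ : tn = t' ∧ j = j' := by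
      have := Sum.inr.inj heq; exact ⟨congrArg Prod.fst this, congrArg Prod.snd this⟩
    exact ht
  · intro hs; exact ⟨tn, j, rfl, hs⟩

-- ### The goodness predicate

def GoodD (ℓ s D : ℕ) (w : BV (h ℓ)) : Prop :=
  anc s (πn w) ∧ nodeDepth (πn w) ≤ D ∧ ¬ InPred s w

lemma goodD_inl_iff {ℓ s D : ℕ} (sn : TNode (h ℓ)) (x : Fin 3) :
    GoodD ℓ s D (Sum.inl (sn, x)) ↔ anc s (sn.1 : ℕ) ∧ nodeDepth (sn.1 : ℕ) ≤ D := by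
  unfold GoodD
  simp [πn, not_inPred_inl]

lemma goodD_inr_iff {ℓ s D : ℕ} (tn : NRNode (h ℓ)) (j : Fin 4) :
    GoodD ℓ s D (Sum.inr (tn, j)) ↔
      anc s (tn.1 : ℕ) ∧ nodeDepth (tn.1 : ℕ) ≤ D ∧ (tn.1 : ℕ) ≠ s := by
  unfold GoodD
  simp [πn, inPred_inr_iff]

-- ### Nset helpers in context

lemma rib_source_eq {ℓ s D : ℕ} (hs1 : 1 ≤ s) (hIs : (nodeDepth s, D) ∈ Nset ℓ) {s' t' : ℕ}
    (h1s' : 1 ≤ s') (hanc : strictAnc s' t')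
    (hmem : (nodeDepth s', nodeDepth t') ∈ Nset ℓ)
    (hanc2 : anc s t') (hdt : nodeDepth t' = D) : s' = s := by
  have e := Nset_right_unique ℓ (nodeDepth s') (nodeDepth s) D (hdt ▸ hmem) hIs
  exact anc_unique_of_depth (anc_of_strictAnc hanc) hanc2 h1s' hs1 e

lemma rib_target_le {ℓ s D : ℕ} (hs1 : 1 ≤ s) (hIs : (nodeDepth s, D) ∈ Nset ℓ) {s' t' : ℕ}
    (hanc : anc s s') (hds' : nodeDepth s' ≤ D)
    (hmem : (nodeDepth s', nodeDepth t') ∈ Nset ℓ) : nodeDepth t' ≤ D :=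
  Nset_laminar ℓ (nodeDepth s) D (nodeDepth s') (nodeDepth t') hIs hmem
    (anc_depth_le hanc hs1) hds'

lemma no_source_at_D {ℓ s D : ℕ} (hIs : (nodeDepth s, D) ∈ Nset ℓ) {j' : ℕ}
    (hm : (D, j') ∈ Nset ℓ) : False :=
  Nset_left_ne_right ℓ (nodeDepth s) D D j' hIs hm rfl

-- ### Edge shape classification

section EdgeShapes

variable {ℓ : ℕ} (C : GChoices ℓ)

/-- clique edge -/
def EClique (u w : BV (h ℓ)) : Prop :=
  ∃ sn i i', u = Sum.inl (sn, i) ∧ w = Sum.inl (sn, i') ∧ i ≠ i'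

/-- tree edge between parent clique and tpred -/
def ETreeT (u w : BV (h ℓ)) : Prop :=
  ∃ sn i tn j, u = Sum.inl (sn, i) ∧ w = Sum.inr (tn, j) ∧
    (sn.1 : ℕ) = (tn.1 : ℕ) / 2 ∧
    ((j = 0 ∧ i = other (C.μ (sn.1 : ℕ) (tn.1 : ℕ)) (C.ε (sn.1 : ℕ) (tn.1 : ℕ))) ∨
     (j = 2 ∧ i = other (C.μ (sn.1 : ℕ) (tn.1 : ℕ)) (! C.ε (sn.1 : ℕ) (tn.1 : ℕ))))

/-- tree edge between a clique and its own bpred -/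
def ETreeB (u w : BV (h ℓ)) : Prop :=
  ∃ sn i tn j, u = Sum.inl (sn, i) ∧ w = Sum.inr (tn, j) ∧
    (sn.1 : ℕ) = (tn.1 : ℕ) ∧
    ((j = 1 ∧ i = other (C.μ (tn.1 : ℕ) ((tn.1 : ℕ) / 2)) (C.ε (tn.1 : ℕ) ((tn.1 : ℕ) / 2))) ∨
     (j = 3 ∧ i = other (C.μ (tn.1 : ℕ) ((tn.1 : ℕ) / 2)) (! C.ε (tn.1 : ℕ) ((tn.1 : ℕ) / 2))))

/-- edge inside pred -/
def EPred (u w : BV (h ℓ)) : Prop :=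
  ∃ tn j j', u = Sum.inr (tn, j) ∧ w = Sum.inr (tn, j') ∧
    ((j = 0 ∧ j' = 1) ∨ (j = 2 ∧ j' = 3))

/-- rib edge -/
def ERib (u w : BV (h ℓ)) : Prop :=
  ∃ sn i tn j, u = Sum.inl (sn, i) ∧ w = Sum.inr (tn, j) ∧
    strictAnc (sn.1 : ℕ) (tn.1 : ℕ) ∧
    (nodeDepth (sn.1 : ℕ), nodeDepth (tn.1 : ℕ)) ∈ Nset ℓ ∧
    (((j = 0 ∨ j = 2) ∧ i = other (topIdx C.toBUChoices (sn.1 : ℕ)) (C.ρ (sn.1 : ℕ) (tn.1 : ℕ))) ∨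
     ((j = 1 ∨ j = 3) ∧ i = other (topIdx C.toBUChoices (sn.1 : ℕ)) (! C.ρ (sn.1 : ℕ) (tn.1 : ℕ))))

lemma adj_cases {u w : BV (h ℓ)} (hadj : (Gl C).Adj u w) :
    EClique u w ∨ ETreeT C u w ∨ ETreeT C w u ∨ ETreeB C u w ∨ ETreeB C w u ∨
      EPred u w ∨ EPred w u ∨ ERib C u w ∨ ERib C w u := by
  rw [Gl, SimpleGraph.fromRel_adj] at hadj
  obtain ⟨hne, hrel⟩ := hadj
  rcases u with ⟨sn, i⟩ | ⟨tn, j⟩ <;> rcases w with ⟨sn', i'⟩ | ⟨tn', j'⟩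
  · -- inl inl
    left
    rcases hrel with (hb | hr) | (hb | hr)
    · exact ⟨sn, i, i', rfl, by rw [hb.1], hb.2⟩
    · exact absurd hr (by simp [ribRel])
    · exact ⟨sn, i, i', rfl, by rw [hb.1], fun hii => hb.2 hii.symm⟩
    · exact absurd hr (by simp [ribRel])
  · -- inl inr
    rcases hrel with (hb | hr) | (hb | hr)
    · rcases hb with hpar | hsame
      · exact Or.inr (Or.inl ⟨sn, i, tn', j', rfl, rfl, hpar.1, hpar.2⟩)
      · exact Or.inr (Or.inr (Or.inr (Or.inl ⟨sn, i, tn', j', rfl, rfl, hsame.1, hsame.2⟩)))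
    · exact Or.inr (Or.inr (Or.inr (Or.inr (Or.inr (Or.inr (Or.inr (Or.inl
        ⟨sn, i, tn', j', rfl, rfl, hr.1, hr.2.1, hr.2.2⟩)))))))
    · exact absurd hb (by simp [buRel])
    · exact absurd hr (by simp [ribRel])
  · -- inr inl
    rcases hrel with (hb | hr) | (hb | hr)
    · exact absurd hb (by simp [buRel])
    · exact absurd hr (by simp [ribRel])
    · rcases hb with hpar | hsame
      · exact Or.inr (Or.inr (Or.inl ⟨sn', i', tn, j, rfl, rfl, hpar.1, hpar.2⟩))
      · exact Or.inr (Or.inr (Or.inr (Or.inr (Or.inl ⟨sn', i', tn, j, rfl, rfl, hsame.1, hsame.2⟩))))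
    · exact Or.inr (Or.inr (Or.inr (Or.inr (Or.inr (Or.inr (Or.inr (Or.inr
        ⟨sn', i', tn, j, rfl, rfl, hr.1, hr.2.1, hr.2.2⟩)))))))
  · -- inr inr
    rcases hrel with (hb | hr) | (hb | hr)
    · exact Or.inr (Or.inr (Or.inr (Or.inr (Or.inr (Or.inl
        ⟨tn, j, j', rfl, by rw [hb.1], hb.2⟩)))))
    · exact absurd hr (by simp [ribRel])
    · exact Or.inr (Or.inr (Or.inr (Or.inr (Or.inr (Or.inr (Or.inl
        ⟨tn, j', j, by rw [hb.1], rfl, hb.2⟩))))))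
    · exact absurd hr (by simp [ribRel])

end EdgeShapes

section Nbrs

variable {ℓ s D : ℕ} (C : GChoices ℓ)

/-- Neighbors of a tpred vertex of a node at depth `D`. -/
lemma nbrs_tpred (hs1 : 1 ≤ s) (hIs : (nodeDepth s, D) ∈ Nset ℓ)
    {z : BV (h ℓ)} {tn : NRNode (h ℓ)} {jx : Fin 4} (hj : jx = 0 ∨ jx = 2)
    (hanc : anc s (tn.1 : ℕ)) (hdt : nodeDepth (tn.1 : ℕ) = D)
    {sn : TNode (h ℓ)} (hsn : (sn.1 : ℕ) = s)
    (hadj : (Gl C).Adj z (Sum.inr (tn, jx))) :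
    (∃ pn : TNode (h ℓ), (pn.1 : ℕ) = (tn.1 : ℕ) / 2 ∧
       z = Sum.inl (pn, other (C.μ ((tn.1 : ℕ) / 2) (tn.1 : ℕ))
         (if jx = 0 then C.ε ((tn.1 : ℕ) / 2) (tn.1 : ℕ) else ! C.ε ((tn.1 : ℕ) / 2) (tn.1 : ℕ))))
    ∨ z = Sum.inr (tn, jx + 1)
    ∨ z = Sum.inl (sn, other (topIdx C.toBUChoices s) (C.ρ s (tn.1 : ℕ))) := by
  rcases adj_cases C hadj with hc | ht1 | ht2 | hb1 | hb2 | hp1 | hp2 | hr1 | hr2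
  · rcases hc with ⟨sn', i, i', hz, hw, hne⟩; simp at hw
  · rcases ht1 with ⟨sn', i, tn', j, hz, hw, hpar, hcase⟩
    simp only [Sum.inr.injEq, Prod.mk.injEq] at hw
    obtain ⟨rfl, rfl⟩ := hw
    left
    refine ⟨sn', by omega, ?_⟩
    rcases hj with rfl | rfl
    · rcases hcase with ⟨-, rfl⟩ | ⟨habs, -⟩
      · rw [hz]; rw [hpar]; simp
      · exact absurd habs (by decide)
    · rcases hcase with ⟨habs, -⟩ | ⟨-, rfl⟩
      · exact absurd habs (by decide)
      · rw [hz]; rw [hpar]; simp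
  · rcases ht2 with ⟨sn', i, tn', j, hz, hw, hpar, hcase⟩; simp at hz
  · rcases hb1 with ⟨sn', i, tn', j, hz, hw, hpar, hcase⟩
    simp only [Sum.inr.injEq, Prod.mk.injEq] at hw
    obtain ⟨rfl, rfl⟩ := hw
    rcases hj with rfl | rfl <;> rcases hcase with ⟨habs, -⟩ | ⟨habs, -⟩ <;>
      exact absurd habs (by decide)
  · rcases hb2 with ⟨sn', i, tn', j, hz, hw, hpar, hcase⟩; simp at hz
  · rcases hp1 with ⟨tn', j, j', hz, hw, hcase⟩
    simp only [Sum.inr.injEq, Prod.mk.injEq] at hw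
    obtain ⟨rfl, rfl⟩ := hw
    rcases hj with rfl | rfl <;> rcases hcase with ⟨-, habs⟩ | ⟨-, habs⟩ <;>
      exact absurd habs (by decide)
  · rcases hp2 with ⟨tn', j, j', hu, hz, hcase⟩
    simp only [Sum.inr.injEq, Prod.mk.injEq] at hu
    obtain ⟨rfl, rfl⟩ := hu
    right; left
    rcases hj with rfl | rfl
    · rcases hcase with ⟨-, rfl⟩ | ⟨habs, -⟩
      · rw [hz]; rfl
      · exact absurd habs (by decide)
    · rcases hcase with ⟨habs, -⟩ | ⟨-, rfl⟩
      · exact absurd habs (by decide)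
      · rw [hz]; rfl
  · rcases hr1 with ⟨sn', i, tn', j, hz, hw, hstrict, hmem, hcase⟩
    simp only [Sum.inr.injEq, Prod.mk.injEq] at hw
    obtain ⟨rfl, rfl⟩ := hw
    have hseq : (sn'.1 : ℕ) = s := rib_source_eq hs1 hIs sn'.2 hstrict hmem hanc hdt
    right; right
    have hsn' : sn' = sn := tnode_ext (by rw [hseq, hsn])
    rcases hcase with ⟨-, rfl⟩ | ⟨habs, -⟩
    · rw [hz, hsn', hsn]
    · rcases hj with rfl | rfl <;> rcases habs with habs | habs <;> exact absurd habs (by decide)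
  · rcases hr2 with ⟨sn', i, tn', j, hz, hw, hstrict, hmem, hcase⟩; simp at hz

/-- Neighbors of a bpred vertex of a node at depth `D`. -/
lemma nbrs_bpred (hs1 : 1 ≤ s) (hIs : (nodeDepth s, D) ∈ Nset ℓ)
    {z : BV (h ℓ)} {tn : NRNode (h ℓ)} {jy : Fin 4} (hj : jy = 1 ∨ jy = 3)
    (hanc : anc s (tn.1 : ℕ)) (hdt : nodeDepth (tn.1 : ℕ) = D)
    {sn : TNode (h ℓ)} (hsn : (sn.1 : ℕ) = s)
    (hadj : (Gl C).Adj z (Sum.inr (tn, jy))) :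
    (∃ tnn : TNode (h ℓ), (tnn.1 : ℕ) = (tn.1 : ℕ) ∧
       z = Sum.inl (tnn, other (C.μ (tn.1 : ℕ) ((tn.1 : ℕ) / 2))
         (if jy = 1 then C.ε (tn.1 : ℕ) ((tn.1 : ℕ) / 2) else ! C.ε (tn.1 : ℕ) ((tn.1 : ℕ) / 2))))
    ∨ z = Sum.inr (tn, jy - 1)
    ∨ z = Sum.inl (sn, other (topIdx C.toBUChoices s) (! C.ρ s (tn.1 : ℕ))) := by
  rcases adj_cases C hadj with hc | ht1 | ht2 | hb1 | hb2 | hp1 | hp2 | hr1 | hr2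
  · rcases hc with ⟨sn', i, i', hz, hw, hne⟩; simp at hw
  · rcases ht1 with ⟨sn', i, tn', j, hz, hw, hpar, hcase⟩
    simp only [Sum.inr.injEq, Prod.mk.injEq] at hw
    obtain ⟨rfl, rfl⟩ := hw
    rcases hj with rfl | rfl <;> rcases hcase with ⟨habs, -⟩ | ⟨habs, -⟩ <;>
      exact absurd habs (by decide)
  · rcases ht2 with ⟨sn', i, tn', j, hz, hw, hpar, hcase⟩; simp at hz
  · rcases hb1 with ⟨sn', i, tn', j, hz, hw, hpar, hcase⟩
    simp only [Sum.inr.injEq, Prod.mk.injEq] at hw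
    obtain ⟨rfl, rfl⟩ := hw
    left
    refine ⟨sn', hpar, ?_⟩
    rcases hj with rfl | rfl
    · rcases hcase with ⟨-, rfl⟩ | ⟨habs, -⟩
      · rw [hz]; simp
      · exact absurd habs (by decide)
    · rcases hcase with ⟨habs, -⟩ | ⟨-, rfl⟩
      · exact absurd habs (by decide)
      · rw [hz]; simp
  · rcases hb2 with ⟨sn', i, tn', j, hz, hw, hpar, hcase⟩; simp at hz
  · rcases hp1 with ⟨tn', j, j', hz, hw, hcase⟩
    simp only [Sum.inr.injEq, Prod.mk.injEq] at hw
    obtain ⟨rfl, rfl⟩ := hw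
    right; left
    rcases hj with rfl | rfl
    · rcases hcase with ⟨rfl, -⟩ | ⟨-, habs⟩
      · rw [hz]; rfl
      · exact absurd habs (by decide)
    · rcases hcase with ⟨-, habs⟩ | ⟨rfl, -⟩
      · exact absurd habs (by decide)
      · rw [hz]; rfl
  · rcases hp2 with ⟨tn', j, j', hu, hz, hcase⟩
    simp only [Sum.inr.injEq, Prod.mk.injEq] at hu
    obtain ⟨rfl, rfl⟩ := hu
    rcases hj with rfl | rfl <;> rcases hcase with ⟨habs, -⟩ | ⟨habs, -⟩ <;>
      exact absurd habs (by decide)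
  · rcases hr1 with ⟨sn', i, tn', j, hz, hw, hstrict, hmem, hcase⟩
    simp only [Sum.inr.injEq, Prod.mk.injEq] at hw
    obtain ⟨rfl, rfl⟩ := hw
    have hseq : (sn'.1 : ℕ) = s := rib_source_eq hs1 hIs sn'.2 hstrict hmem hanc hdt
    right; right
    have hsn' : sn' = sn := tnode_ext (by rw [hseq, hsn])
    rcases hcase with ⟨habs, -⟩ | ⟨-, rfl⟩
    · rcases hj with rfl | rfl <;> rcases habs with habs | habs <;> exact absurd habs (by decide)
    · rw [hz, hsn', hsn]
  · rcases hr2 with ⟨sn', i, tn', j, hz, hw, hstrict, hmem, hcase⟩; simp at hz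

/-- Good neighbors of a clique vertex at a node of depth `D` lie in the clique
or in the bpred of that node. -/
lemma nbrs_leafclique (hs1 : 1 ≤ s) (hIs : (nodeDepth s, D) ∈ Nset ℓ)
    {z : BV (h ℓ)} {tn : TNode (h ℓ)} {x : Fin 3}
    (hanc : anc s (tn.1 : ℕ)) (hdt : nodeDepth (tn.1 : ℕ) = D)
    (hgz : GoodD ℓ s D z)
    (hadj : (Gl C).Adj z (Sum.inl (tn, x))) :
    (∃ x', z = Sum.inl (tn, x'))
    ∨ (∃ (tnn : NRNode (h ℓ)) (jy : Fin 4), (tnn.1 : ℕ) = (tn.1 : ℕ) ∧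
        (jy = 1 ∨ jy = 3) ∧ z = Sum.inr (tnn, jy)) := by
  rcases adj_cases C hadj with hc | ht1 | ht2 | hb1 | hb2 | hp1 | hp2 | hr1 | hr2
  · rcases hc with ⟨sn', i, i', hz, hw, hne⟩
    simp only [Sum.inl.injEq, Prod.mk.injEq] at hw
    obtain ⟨rfl, rfl⟩ := hw
    exact Or.inl ⟨i, hz⟩
  · rcases ht1 with ⟨sn', i, tn', j, hz, hw, hpar, hcase⟩; simp at hw
  · rcases ht2 with ⟨sn', i, tn', j, hw, hz, hpar, hcase⟩
    simp only [Sum.inl.injEq, Prod.mk.injEq] at hw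
    obtain ⟨rfl, rfl⟩ := hw
    exfalso
    have h2c : 2 ≤ (tn'.1 : ℕ) := tn'.2
    have hdc := nodeDepth_parent h2c
    rw [← hpar, hdt] at hdc
    rw [hz] at hgz
    rw [goodD_inr_iff] at hgz
    omega
  · rcases hb1 with ⟨sn', i, tn', j, hz, hw, hpar, hcase⟩; simp at hw
  · rcases hb2 with ⟨sn', i, tn', j, hw, hz, hpar, hcase⟩
    simp only [Sum.inl.injEq, Prod.mk.injEq] at hw
    obtain ⟨rfl, rfl⟩ := hw
    right
    refine ⟨tn', j, hpar.symm, ?_, hz⟩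
    rcases hcase with ⟨rfl, -⟩ | ⟨rfl, -⟩
    · exact Or.inl rfl
    · exact Or.inr rfl
  · rcases hp1 with ⟨tn', j, j', hz, hw, hcase⟩; simp at hw
  · rcases hp2 with ⟨tn', j, j', hw, hz, hcase⟩; simp at hw
  · rcases hr1 with ⟨sn', i, tn', j, hz, hw, hstrict, hmem, hcase⟩; simp at hw
  · rcases hr2 with ⟨sn', i, tn', j, hw, hz, hstrict, hmem, hcase⟩
    simp only [Sum.inl.injEq, Prod.mk.injEq] at hw
    obtain ⟨rfl, rfl⟩ := hw
    exact absurd (hdt ▸ hmem) (fun hm => no_source_at_D hIs hm)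

/-- A good-to-good edge going from depth `D` to smaller depth. -/
lemma edge_down (hs1 : 1 ≤ s) (hIs : (nodeDepth s, D) ∈ Nset ℓ)
    {w w' : BV (h ℓ)} (hg : GoodD ℓ s D w) (hg' : GoodD ℓ s D w')
    (hDw : nodeDepth (πn w) = D) (hDw' : nodeDepth (πn w') < D)
    (hadj : (Gl C).Adj w w') :
    (∃ tn jx, w = Sum.inr (tn, jx) ∧ (jx = (0 : Fin 4) ∨ jx = 2) ∧
       anc s (tn.1 : ℕ) ∧ nodeDepth (tn.1 : ℕ) = D)
    ∨ (∃ sn x, w' = Sum.inl (sn, x) ∧ (sn.1 : ℕ) = s ∧ x ≠ topIdx C.toBUChoices s) := by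
  rcases adj_cases C hadj with hc | ht1 | ht2 | hb1 | hb2 | hp1 | hp2 | hr1 | hr2
  · rcases hc with ⟨sn', i, i', rfl, rfl, -⟩
    exfalso; simp only [πn] at hDw hDw'; omega
  · rcases ht1 with ⟨sn', i, tn', j, rfl, rfl, hpar, -⟩
    exfalso
    have h2c : 2 ≤ (tn'.1 : ℕ) := tn'.2
    have hdc := nodeDepth_parent h2c
    simp only [πn] at hDw hDw'
    rw [hpar] at hDw
    omega
  · rcases ht2 with ⟨sn', i, tn', j, rfl, rfl, hpar, hcase⟩
    left
    refine ⟨tn', j, rfl, ?_, ?_, ?_⟩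
    · rcases hcase with ⟨rfl, -⟩ | ⟨rfl, -⟩
      · exact Or.inl rfl
      · exact Or.inr rfl
    · exact (goodD_inr_iff _ _).1 hg |>.1
    · exact hDw
  · rcases hb1 with ⟨sn', i, tn', j, rfl, rfl, heq, -⟩
    exfalso; simp only [πn] at hDw hDw'; rw [heq] at hDw; omega
  · rcases hb2 with ⟨sn', i, tn', j, rfl, rfl, heq, -⟩
    exfalso; simp only [πn] at hDw hDw'; rw [heq] at hDw'; omega
  · rcases hp1 with ⟨tn', j, j', rfl, rfl, -⟩
    exfalso; simp only [πn] at hDw hDw'; omega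
  · rcases hp2 with ⟨tn', j, j', rfl, rfl, -⟩
    exfalso; simp only [πn] at hDw hDw'; omega
  · rcases hr1 with ⟨sn', i, tn', j, rfl, rfl, hstrict, hmem, -⟩
    exfalso
    simp only [πn] at hDw hDw'
    exact no_source_at_D hIs (hDw ▸ hmem)
  · rcases hr2 with ⟨sn', i, tn', j, rfl, rfl, hstrict, hmem, hcase⟩
    right
    simp only [πn] at hDw hDw'
    have hseq : (sn'.1 : ℕ) = s :=
      rib_source_eq hs1 hIs sn'.2 hstrict hmem ((goodD_inr_iff _ _).1 hg).1 hDw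
    refine ⟨sn', i, rfl, hseq, ?_⟩
    rcases hcase with ⟨-, rfl⟩ | ⟨-, rfl⟩ <;> rw [hseq] <;> exact other_ne _ _

/-- The boundary lemma: an edge of `G_ℓ` leaving the good region does so either
at the top edge of `K^s` (towards `bpred s`), or from a clique at depth `D`. -/
lemma boundary (hs2 : 2 ≤ s) (hIs : (nodeDepth s, D) ∈ Nset ℓ)
    {w w' : BV (h ℓ)} (hg : GoodD ℓ s D w) (hb : ¬ GoodD ℓ s D w')
    (hadj : (Gl C).Adj w w') :
    (∃ sn x tn j, w = Sum.inl (sn, x) ∧ (sn.1 : ℕ) = s ∧ x ≠ topIdx C.toBUChoices s ∧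
       w' = Sum.inr (tn, j) ∧ (tn.1 : ℕ) = s)
    ∨ (∃ tn x, w = Sum.inl (tn, x) ∧ anc s (tn.1 : ℕ) ∧ nodeDepth (tn.1 : ℕ) = D) := by
  have hs1 : 1 ≤ s := by omega
  rcases adj_cases C hadj with hc | ht1 | ht2 | hb1 | hb2 | hp1 | hp2 | hr1 | hr2
  · rcases hc with ⟨sn', i, i', rfl, rfl, -⟩
    exact absurd ((goodD_inl_iff _ _).2 ((goodD_inl_iff _ _).1 hg)) hb
  · -- w parent clique, w' = tpred of child
    rcases ht1 with ⟨sn', i, tn', j, rfl, rfl, hpar, -⟩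
    have h2c : 2 ≤ (tn'.1 : ℕ) := tn'.2
    have hdc := nodeDepth_parent h2c
    rw [goodD_inl_iff] at hg
    have hancc : anc s (tn'.1 : ℕ) := anc_child hg.1 hpar
    have hdlt : nodeDepth s ≤ nodeDepth (sn'.1 : ℕ) := anc_depth_le hg.1 hs1
    have hgd : nodeDepth (sn'.1 : ℕ) ≤ D := hg.2
    have hdsn : nodeDepth (sn'.1 : ℕ) = nodeDepth ((tn'.1 : ℕ) / 2) := by rw [hpar]
    have hcnes : (tn'.1 : ℕ) ≠ s := by
      intro he
      have hx : nodeDepth (tn'.1 : ℕ) = nodeDepth s := by rw [he]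
      omega
    by_cases hdD : nodeDepth (tn'.1 : ℕ) ≤ D
    · exact absurd ((goodD_inr_iff _ _).2 ⟨hancc, hdD, hcnes⟩) hb
    · right
      exact ⟨sn', i, rfl, hg.1, by omega⟩
  · -- w = tpred, w' parent clique : w' is good, contradiction
    rcases ht2 with ⟨sn', i, tn', j, rfl, rfl, hpar, -⟩
    exfalso
    rw [goodD_inr_iff] at hg
    have hstrict : strictAnc s (tn'.1 : ℕ) := strictAnc_of_anc_ne hg.1 (Ne.symm hg.2.2)
    have hancp : anc s ((tn'.1 : ℕ) / 2) := anc_parent_of_strict hstrict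
    have h2c : 2 ≤ (tn'.1 : ℕ) := tn'.2
    have hdc := nodeDepth_parent h2c
    have hgd : nodeDepth (tn'.1 : ℕ) ≤ D := hg.2.1
    refine hb ((goodD_inl_iff _ _).2 ⟨hpar ▸ hancp, ?_⟩)
    rw [hpar]; omega
  · -- w in clique, w' in bpred of same node
    rcases hb1 with ⟨sn', i, tn', j, rfl, rfl, heq, hcase⟩
    rw [goodD_inl_iff] at hg
    by_cases hts : (tn'.1 : ℕ) = s
    · left
      refine ⟨sn', i, tn', j, rfl, by omega, ?_, rfl, hts⟩
      rw [topIdx_eq _ hs2]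
      have : (sn'.1 : ℕ) = s := by omega
      rcases hcase with ⟨-, rfl⟩ | ⟨-, rfl⟩ <;> rw [hts] <;> exact other_ne _ _
    · exact absurd ((goodD_inr_iff _ _).2 ⟨heq ▸ hg.1, heq ▸ hg.2, hts⟩) hb
  · -- w in bpred, w' in clique of same node: w' good, contradiction
    rcases hb2 with ⟨sn', i, tn', j, rfl, rfl, heq, -⟩
    rw [goodD_inr_iff] at hg
    exact absurd ((goodD_inl_iff _ _).2 ⟨heq ▸ hg.1, heq ▸ hg.2.1⟩) hb
  · rcases hp1 with ⟨tn', j, j', rfl, rfl, -⟩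
    rw [goodD_inr_iff] at hg
    exact absurd ((goodD_inr_iff _ _).2 hg) hb
  · rcases hp2 with ⟨tn', j, j', rfl, rfl, -⟩
    rw [goodD_inr_iff] at hg
    exact absurd ((goodD_inr_iff _ _).2 hg) hb
  · -- w = rib source (inl), w' = rib target (inr) : w' good, contradiction
    rcases hr1 with ⟨sn', i, tn', j, rfl, rfl, hstrict, hmem, -⟩
    exfalso
    rw [goodD_inl_iff] at hg
    have hanct : anc s (tn'.1 : ℕ) := anc_trans hg.1 (anc_of_strictAnc hstrict)
    have hdle : nodeDepth (tn'.1 : ℕ) ≤ D := rib_target_le hs1 hIs hg.1 hg.2 hmem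
    refine hb ((goodD_inr_iff _ _).2 ⟨hanct, hdle, ?_⟩)
    intro he
    have h1 := strictAnc_depth_lt hstrict sn'.2
    have h2 := anc_depth_le hg.1 hs1
    rw [he] at h1
    omega
  · -- w = rib target (inr), w' = rib source (inl) : w' good, contradiction
    rcases hr2 with ⟨sn', i, tn', j, rfl, rfl, hstrict, hmem, -⟩
    exfalso
    rw [goodD_inr_iff] at hg
    have hdst : nodeDepth s < nodeDepth (tn'.1 : ℕ) :=
      strictAnc_depth_lt (strictAnc_of_anc_ne hg.1 (Ne.symm hg.2.2)) hs1
    rcases anc_comparable hg.1 (anc_of_strictAnc hstrict) with hss' | hs's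
    · refine hb ((goodD_inl_iff _ _).2 ⟨hss', ?_⟩)
      have := strictAnc_depth_lt hstrict sn'.2
      omega
    · by_cases he : (sn'.1 : ℕ) = s
      · exact hb ((goodD_inl_iff _ _).2 ⟨he ▸ anc_refl s, by
          have := strictAnc_depth_lt hstrict sn'.2; rw [he]; omega⟩)
      · have hstrict2 : strictAnc (sn'.1 : ℕ) s := strictAnc_of_anc_ne hs's he
        have hd1 : nodeDepth (sn'.1 : ℕ) < nodeDepth s := strictAnc_depth_lt hstrict2 sn'.2
        have hlam := Nset_laminar ℓ (nodeDepth (sn'.1 : ℕ)) (nodeDepth (tn'.1 : ℕ))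
          (nodeDepth s) D hmem hIs (by omega) (by omega)
        have : nodeDepth (tn'.1 : ℕ) = D := by omega
        have := Nset_right_unique ℓ (nodeDepth (sn'.1 : ℕ)) (nodeDepth s) D
          (this ▸ hmem) hIs
        omega
end Nbrs

section MainArg

variable {ℓ s D q : ℕ} {C : GChoices ℓ} {v : Fin q → BV (h ℓ)}

lemma vcast {α : Sort*} (v : Fin q → α) {k k' : ℕ} (hk : k < q) (hk' : k' < q)
    (he : k = k') : v ⟨k, hk⟩ = v ⟨k', hk'⟩ := by subst he; rfl

lemma ipath_adj (hQ : IsInducedPathSeq (Gl C) v) {k : ℕ} (hk1 : k + 1 < q) :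
    (Gl C).Adj (v ⟨k, Nat.lt_of_succ_lt hk1⟩) (v ⟨k + 1, hk1⟩) :=
  hQ.1.2 ⟨k, Nat.lt_of_succ_lt hk1⟩ ⟨k + 1, hk1⟩ rfl

lemma ipath_first (hQ : IsInducedPathSeq (Gl C) v) {k : ℕ} (h0q : 0 < q) (hk : k < q)
    (hadj : (Gl C).Adj (v ⟨0, h0q⟩) (v ⟨k, hk⟩)) : k = 1 := by
  rcases Nat.lt_or_ge k 2 with h2 | h2
  · interval_cases k
    · exact absurd hadj ((Gl C).irrefl)
    · rfl
  · exact absurd hadj (hQ.2 ⟨0, h0q⟩ ⟨k, hk⟩ (by exact (by omega : 0 + 1 < k)))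

lemma clique_adj (sn : TNode (h ℓ)) {x x' : Fin 3} (hne : x ≠ x') :
    (Gl C).Adj (Sum.inl (sn, x)) (Sum.inl (sn, x')) := by
  rw [Gl, SimpleGraph.fromRel_adj]
  exact ⟨by simp [hne], Or.inl (Or.inl ⟨rfl, hne⟩)⟩

lemma not_other_of_ne : ∀ (e x : Fin 3) (b : Bool), x ≠ e → x ≠ other e b → x = other e !b := by
  decide

lemma rib_adj (C : GChoices ℓ) (hs1 : 1 ≤ s) (hIs : (nodeDepth s, D) ∈ Nset ℓ)
    {tn : NRNode (h ℓ)} (hanc : anc s (tn.1 : ℕ)) (hne : (tn.1 : ℕ) ≠ s)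
    (hdt : nodeDepth (tn.1 : ℕ) = D) (sn : TNode (h ℓ)) (hsn : (sn.1 : ℕ) = s)
    (j : Fin 4) (b : Bool)
    (hmatch : ((j = 0 ∨ j = 2) ∧ b = C.ρ s (tn.1 : ℕ)) ∨
              ((j = 1 ∨ j = 3) ∧ b = ! C.ρ s (tn.1 : ℕ))) :
    (Gl C).Adj (Sum.inl (sn, other (topIdx C.toBUChoices s) b)) (Sum.inr (tn, j)) := by
  subst hsn
  rw [Gl, SimpleGraph.fromRel_adj]
  refine ⟨by simp, Or.inl (Or.inr ?_)⟩
  show strictAnc (sn.1 : ℕ) (tn.1 : ℕ) ∧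
    (nodeDepth (sn.1 : ℕ), nodeDepth (tn.1 : ℕ)) ∈ Nset ℓ ∧ _
  refine ⟨strictAnc_of_anc_ne hanc (Ne.symm hne), by rw [hdt]; exact hIs, ?_⟩
  rcases hmatch with ⟨hj, rfl⟩ | ⟨hj, rfl⟩
  · exact Or.inl ⟨hj, rfl⟩
  · exact Or.inr ⟨hj, rfl⟩

/-- If `v k` is a vertex of the top edge of `K^s` then `k ≤ 1`. -/
lemma top_index (hQ : IsInducedPathSeq (Gl C) v)
    {sn0 : TNode (h ℓ)} {x0 : Fin 3} (h0q : 0 < q)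
    (hv0 : v ⟨0, h0q⟩ = Sum.inl (sn0, x0)) (hsn0 : (sn0.1 : ℕ) = s)
    {k : ℕ} (hk : k < q) {sn' : TNode (h ℓ)} {x : Fin 3}
    (hvk : v ⟨k, hk⟩ = Sum.inl (sn', x)) (hsn' : (sn'.1 : ℕ) = s) : k ≤ 1 := by
  have hsne : sn' = sn0 := tnode_ext (by rw [hsn', hsn0])
  subst hsne
  by_cases hxx : x0 = x
  · subst hxx
    have : (⟨0, h0q⟩ : Fin q) = ⟨k, hk⟩ := hQ.1.1 (hv0.trans hvk.symm)
    have : (0 : ℕ) = k := congrArg Fin.val this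
    omega
  · have hadj : (Gl C).Adj (v ⟨0, h0q⟩) (v ⟨k, hk⟩) := by
      rw [hv0, hvk]; exact clique_adj sn' hxx
    have := ipath_first hQ h0q hk hadj
    omega

/-- The re-entry/descent contradiction: a bad vertex at `k₀` followed later by a
good vertex at depth `< D` is impossible. -/
lemma reentry_contra (C : GChoices ℓ) (hs2 : 2 ≤ s) (hIs : (nodeDepth s, D) ∈ Nset ℓ)
    (hQ : IsInducedPathSeq (Gl C) v)
    {sn0 : TNode (h ℓ)} {x0 : Fin 3} (h0q : 0 < q)
    (hv0 : v ⟨0, h0q⟩ = Sum.inl (sn0, x0)) (hsn0 : (sn0.1 : ℕ) = s)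
    (hx0 : x0 ≠ topIdx C.toBUChoices s)
    {k₀ : ℕ} (hk₀q : k₀ < q) (hk₀1 : 1 ≤ k₀)
    (hbadk₀ : ¬ GoodD ℓ s D (v ⟨k₀, hk₀q⟩))
    {jst : ℕ} (hjq : jst < q) (hjgt : k₀ < jst)
    (hjgood : GoodD ℓ s D (v ⟨jst, hjq⟩))
    (hjdepth : nodeDepth (πn (v ⟨jst, hjq⟩)) < D) : False := by
  classical
  have hs1 : 1 ≤ s := by omega
  -- first good index after k₀
  have hM : ∃ m, k₀ < m ∧ ∃ hm : m < q, GoodD ℓ s D (v ⟨m, hm⟩) := ⟨jst, hjgt, hjq, hjgood⟩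
  set m := Nat.find hM with hmdef
  obtain ⟨hmgt, hmq, hmgood⟩ := Nat.find_spec hM
  have hmmin : ∀ m', k₀ < m' → m' < m → ∀ hm' : m' < q, ¬ GoodD ℓ s D (v ⟨m', hm'⟩) := by
    intro m' h1 h2 hm' hgood
    exact Nat.find_min hM h2 ⟨h1, hm', hgood⟩
  have hm1q : m - 1 < q := by omega
  have hm1bad : ¬ GoodD ℓ s D (v ⟨m - 1, hm1q⟩) := by
    rcases Nat.lt_or_ge k₀ (m - 1) with hlt | hge
    · exact hmmin (m - 1) hlt (by omega) hm1q
    · have : m - 1 = k₀ := by omega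
      rw [vcast v hm1q hk₀q this]
      exact hbadk₀
  have hadjm : (Gl C).Adj (v ⟨m, hmq⟩) (v ⟨m - 1, hm1q⟩) := by
    have := ipath_adj hQ (k := m - 1) (by omega)
    rw [vcast v (Nat.lt_of_succ_lt (by omega : m - 1 + 1 < q)) hm1q rfl] at this
    exact ((vcast v (by omega : m - 1 + 1 < q) hmq (by omega)) ▸ this).symm
  rcases boundary C hs2 hIs hmgood hm1bad hadjm with
    ⟨snA, xA, tnA, jA, hvm, hsnA, hxA, -, -⟩ | ⟨tnm, xm, hvm, hancm, hdm⟩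
  · have := top_index hQ h0q hv0 hsn0 hmq hvm hsnA
    omega
  -- v m is in a clique at depth D
  have hjgtm : m < jst := by
    have hle : m ≤ jst := Nat.find_min' hM ⟨hjgt, hjq, hjgood⟩
    rcases Nat.lt_or_ge m jst with h | h
    · exact h
    · exfalso
      have : m = jst := by omega
      subst this
      rw [vcast v hjq hmq rfl, hvm] at hjdepth
      simp only [πn] at hjdepth
      omega
  -- first index after m which is good of depth < D
  have hR : ∃ r, m < r ∧ ∃ hr : r < q,
      GoodD ℓ s D (v ⟨r, hr⟩) ∧ nodeDepth (πn (v ⟨r, hr⟩)) < D :=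
    ⟨jst, hjgtm, hjq, hjgood, hjdepth⟩
  set r := Nat.find hR with hrdef
  obtain ⟨hrgt, hrq, hrgood, hrdepth⟩ := Nat.find_spec hR
  have hr1q : r - 1 < q := by omega
  have hadjr : (Gl C).Adj (v ⟨r - 1, hr1q⟩) (v ⟨r, hrq⟩) := by
    have := ipath_adj hQ (k := r - 1) (by omega)
    rw [vcast v (Nat.lt_of_succ_lt (by omega : r - 1 + 1 < q)) hr1q rfl] at this
    exact (vcast v (by omega : r - 1 + 1 < q) hrq (by omega)) ▸ this
  have hr1good : GoodD ℓ s D (v ⟨r - 1, hr1q⟩) := by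
    by_contra hbad
    rcases boundary C hs2 hIs hrgood hbad hadjr.symm with
      ⟨snA, xA, tnA, jA, hvr, hsnA, hxA, -, -⟩ | ⟨tnr, xr, hvr, hancr, hdr⟩
    · have := top_index hQ h0q hv0 hsn0 hrq hvr hsnA
      omega
    · rw [hvr] at hrdepth
      simp only [πn] at hrdepth
      omega
  have hr1depth : nodeDepth (πn (v ⟨r - 1, hr1q⟩)) = D := by
    have hle : nodeDepth (πn (v ⟨r - 1, hr1q⟩)) ≤ D := hr1good.2.1
    rcases Nat.lt_or_ge (nodeDepth (πn (v ⟨r - 1, hr1q⟩))) D with hlt | hge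
    · exfalso
      rcases Nat.lt_or_ge m (r - 1) with hmr | hmr
      · exact Nat.find_min hR (by omega : r - 1 < r) ⟨hmr, hr1q, hr1good, hlt⟩
      · have : r - 1 = m := by omega
        rw [vcast v hr1q hmq this, hvm] at hlt
        simp only [πn] at hlt
        omega
    · omega
  -- the edge from r-1 to r goes down in depth
  rcases edge_down C hs1 hIs hr1good hrgood hr1depth hrdepth hadjr with
    ⟨tnr, jx, hvr1, hjx, hancr, hdtr⟩ | ⟨snB, xB, hvr, hsnB, hxB⟩
  swap
  · have := top_index hQ h0q hv0 hsn0 hrq hvr hsnB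
    omega
  -- v (r-1) is a tpred vertex of a leaf tnr
  have hrge4 : 4 ≤ r := by
    rcases Nat.lt_or_ge r 4 with h4 | h4
    · exfalso
      have hr3 : r = 3 := by omega
      have hm2 : m = 2 := by omega
      have : r - 1 = m := by omega
      rw [vcast v hr1q hmq this, hvm] at hvr1
      simp at hvr1
    · exact h4
  have htnes : (tnr.1 : ℕ) ≠ s := by
    intro he
    have : nodeDepth s + 2 ≤ D := (Nset_bounds ℓ _ _ hIs).2.1
    rw [← he, hdtr] at this
    omega
  -- rib endpoints
  by_cases hbx : x0 = other (topIdx C.toBUChoices s) (C.ρ s (tnr.1 : ℕ))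
  · -- v 0 is rib-adjacent to v (r-1): chord
    have hadj0 : (Gl C).Adj (v ⟨0, h0q⟩) (v ⟨r - 1, hr1q⟩) := by
      rw [hv0, hvr1, hbx]
      exact rib_adj C hs1 hIs hancr htnes hdtr sn0 hsn0 jx (C.ρ s (tnr.1 : ℕ)) (Or.inl ⟨hjx, rfl⟩)
    have := ipath_first hQ h0q hr1q hadj0
    omega
  · have hbx' : x0 = other (topIdx C.toBUChoices s) (! C.ρ s (tnr.1 : ℕ)) :=
      not_other_of_ne _ _ _ hx0 hbx
    -- look at v (r-2)
    have hr2q : r - 2 < q := by omega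
    have hadj2 : (Gl C).Adj (v ⟨r - 2, hr2q⟩) (v ⟨r - 1, hr1q⟩) := by
      have := ipath_adj hQ (k := r - 2) (by omega : r - 2 + 1 < q)
      rw [vcast v (Nat.lt_of_succ_lt (by omega : r - 2 + 1 < q)) hr2q rfl] at this
      exact (vcast v (by omega : r - 2 + 1 < q) hr1q (by omega)) ▸ this
    rw [hvr1] at hadj2
    rcases nbrs_tpred C hs1 hIs hjx hancr hdtr hsn0 hadj2 with
      ⟨pn, hpn, hvr2⟩ | hvr2 | hvr2
    · -- v (r-2) is the parent clique vertex; analyze v r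
      have hadj3 : (Gl C).Adj (v ⟨r, hrq⟩) (Sum.inr (tnr, jx)) := by
        have := hadjr.symm
        rw [hvr1] at this
        exact this
      rcases nbrs_tpred C hs1 hIs hjx hancr hdtr hsn0 hadj3 with
        ⟨pn', hpn', hvr'⟩ | hvr' | hvr'
      · have hpe : pn' = pn := tnode_ext (by rw [hpn, hpn'])
        rw [hpe] at hvr'
        have : (⟨r - 2, hr2q⟩ : Fin q) = ⟨r, hrq⟩ := hQ.1.1 (hvr2.trans hvr'.symm)
        have := congrArg Fin.val this
        simp at this
        omega
      · rw [hvr'] at hrdepth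
        simp only [πn] at hrdepth
        omega
      · have := top_index hQ h0q hv0 hsn0 hrq hvr' hsn0
        omega
    · -- v (r-2) is the bpred partner: rib-adjacent to v 0, chord
      have hadj0 : (Gl C).Adj (v ⟨0, h0q⟩) (v ⟨r - 2, hr2q⟩) := by
        rw [hv0, hvr2, hbx']
        refine rib_adj C hs1 hIs hancr htnes hdtr sn0 hsn0 (jx + 1) (! C.ρ s (tnr.1 : ℕ))
          (Or.inr ⟨?_, rfl⟩)
        rcases hjx with rfl | rfl
        · exact Or.inl rfl
        · exact Or.inr rfl
      have := ipath_first hQ h0q hr2q hadj0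
      omega
    · -- v (r-2) is a top edge vertex of K^s
      have := top_index hQ h0q hv0 hsn0 hr2q hvr2 hsn0
      omega

end MainArg

lemma Nset_root : ∀ ℓ, 1 ≤ ℓ → (1, h ℓ) ∈ Nset ℓ
  | 1, _ => rfl
  | (n+2), _ => Set.mem_union_left _ (Set.mem_union_left _ rfl)

lemma pi_bounds {p : ℕ} (w : BV p) : 1 ≤ πn w ∧ πn w < 2 ^ p := by
  rcases w with ⟨sn, x⟩ | ⟨tn, j⟩
  · exact ⟨sn.2, sn.1.isLt⟩
  · refine ⟨?_, ?_⟩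
    · show 1 ≤ (tn.1 : ℕ)
      have := tn.2
      omega
    · show (tn.1 : ℕ) < 2 ^ p
      exact tn.1.isLt

lemma nodeDepth_one : nodeDepth 1 = 1 := by
  unfold nodeDepth; rw [Nat.log_one_right]

lemma statement15' :
    ∀ ℓ : ℕ, 1 ≤ ℓ → ∀ C : GChoices ℓ, ∀ q : ℕ, ∀ hq : 1 ≤ q,
      ∀ v : Fin q → BV (h ℓ), IsInducedPathSeq (Gl C) v →
        ∀ s a : ℕ, IsSourceOfRank ℓ s a →
          TopEdgeVert C s (v ⟨0, hq⟩) →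
          QSpecial C v s →
          ∀ i : Fin q, SubtreeNode ℓ s a (πn (v i)) ∧ ¬ InPred s (v i) := by
  intro ℓ hℓ C q hq v hQ s a hsrc htop hsp i
  classical
  obtain ⟨hnode, ha1, haℓ, hIs⟩ := hsrc
  obtain ⟨D, hDdef⟩ : ∃ D, D = nodeDepth s + h a - 1 := ⟨_, rfl⟩
  rw [← hDdef] at hIs
  obtain ⟨sn0, x0, hv0, hsn0, hx0⟩ := htop
  suffices hGood : GoodD ℓ s D (v i) by
    refine ⟨⟨hGood.1, ?_⟩, hGood.2.2⟩
    rw [← hDdef]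
    exact hGood.2.1
  by_cases hseq1 : s = 1
  · -- the root case is trivial
    subst hseq1
    have hD : D = h ℓ := by
      have h1 := Nset_root ℓ hℓ
      rw [← nodeDepth_one] at h1
      exact Nset_left_unique ℓ (nodeDepth 1) D (h ℓ) hIs h1
    obtain ⟨hpi1, hpi2⟩ := pi_bounds (v i)
    refine ⟨anc_one hpi1, ?_, ?_⟩
    · rw [hD]
      exact nodeDepth_le_of_lt_pow hpi1 hpi2
    · rintro ⟨tn, j, heq, ht⟩
      have := tn.2
      omega
  · -- the main case
    have hs2 : 2 ≤ s := by
      have := hnode.1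
      omega
    have hs1 : 1 ≤ s := by omega
    have hbnd := Nset_bounds ℓ _ _ hIs
    have hD2 : nodeDepth s + 2 ≤ D := hbnd.2.1
    have h0q : 0 < q := hq
    by_contra hbad
    -- the good region contains v 0
    have hg0 : GoodD ℓ s D (v ⟨0, h0q⟩) := by
      rw [hv0, goodD_inl_iff, hsn0]
      exact ⟨anc_refl s, by omega⟩
    -- minimal bad index
    have hP : ∃ k, ∃ hk : k < q, ¬ GoodD ℓ s D (v ⟨k, hk⟩) := ⟨i, i.2, hbad⟩
    set k₀ := Nat.find hP with hk₀def
    obtain ⟨hk₀q, hk₀bad⟩ := Nat.find_spec hP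
    have good_before : ∀ k, k < k₀ → ∀ hk : k < q, GoodD ℓ s D (v ⟨k, hk⟩) := by
      intro k hklt hk
      by_contra hng
      exact Nat.find_min hP hklt ⟨hk, hng⟩
    have hk₀1 : 1 ≤ k₀ := by
      by_contra hcon
      have : k₀ = 0 := by omega
      rw [vcast v hk₀q h0q this] at hk₀bad
      exact hk₀bad hg0
    -- the special witness
    obtain ⟨a', hsrc', -, jF, hint⟩ := hsp
    have hDeq : nodeDepth s + h a' - 1 = D :=
      Nset_left_unique ℓ (nodeDepth s) _ _ hsrc'.2.2.2 hIs
    set jst := (jF : ℕ) with hjstdef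
    have hjq : jst < q := jF.isLt
    have hstrictj : strictAnc s (πn (v ⟨jst, hjq⟩)) := hint.1
    have hjdepth : nodeDepth (πn (v ⟨jst, hjq⟩)) < D := by
      have h2 : nodeDepth (πn (v ⟨jst, hjq⟩)) < nodeDepth s + h a' - 1 := hint.2
      omega
    have hdsj : nodeDepth s < nodeDepth (πn (v ⟨jst, hjq⟩)) :=
      strictAnc_depth_lt hstrictj hs1
    have hjgood : GoodD ℓ s D (v ⟨jst, hjq⟩) := by
      refine ⟨anc_of_strictAnc hstrictj, le_of_lt hjdepth, ?_⟩
      rintro ⟨tn, j, heq, ht⟩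
      have hps : πn (v ⟨jst, hjq⟩) = s := by rw [heq]; exact ht
      have : nodeDepth (πn (v ⟨jst, hjq⟩)) = nodeDepth s := by rw [hps]
      omega
    have hjnek₀ : jst ≠ k₀ := by
      intro he
      rw [vcast v hjq hk₀q he] at hjgood
      exact hk₀bad hjgood
    -- boundary crossing at k₀
    have hk₁q : k₀ - 1 < q := by omega
    have hgk₁ : GoodD ℓ s D (v ⟨k₀ - 1, hk₁q⟩) := good_before _ (by omega) _
    have hadjk : (Gl C).Adj (v ⟨k₀ - 1, hk₁q⟩) (v ⟨k₀, hk₀q⟩) :=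
      hQ.1.2 ⟨k₀ - 1, hk₁q⟩ ⟨k₀, hk₀q⟩ (show k₀ = k₀ - 1 + 1 by omega)
    rcases boundary C hs2 hIs hgk₁ hk₀bad hadjk with
      ⟨snA, xA, tnA, jA, hvk1, hsnA, hxA, hvk0, htnA⟩ | ⟨tnB, xB, hvk1, hancB, hdB⟩
    · -- case (A): exit through bpred s
      have hk01 : k₀ - 1 ≤ 1 := top_index hQ h0q hv0 hsn0 hk₁q hvk1 hsnA
      have hjgt : k₀ < jst := by
        rcases Nat.lt_or_ge k₀ jst with hlt | hge
        · exact hlt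
        · exfalso
          have hjlt : jst < k₀ := by omega
          rcases Nat.eq_zero_or_pos jst with hj0 | hj1
          · rw [vcast v hjq h0q hj0, hv0] at hdsj
            simp only [πn] at hdsj
            rw [hsn0] at hdsj
            omega
          · have hj1' : jst = k₀ - 1 := by omega
            rw [vcast v hjq hk₁q hj1', hvk1] at hdsj
            simp only [πn] at hdsj
            rw [hsnA] at hdsj
            omega
      exact reentry_contra C hs2 hIs hQ h0q hv0 hsn0 hx0 hk₀q hk₀1 hk₀bad hjq hjgt
        hjgood hjdepth
    · -- case (B): exit below a leaf clique K^{tnB}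
      have hk₀2 : 2 ≤ k₀ := by
        by_contra hcon
        have h1 : k₀ - 1 = 0 := by omega
        rw [vcast v hk₁q h0q h1, hv0] at hvk1
        have : sn0 = tnB ∧ x0 = xB := by
          have := Sum.inl.inj hvk1
          exact ⟨congrArg Prod.fst this, congrArg Prod.snd this⟩
        have hdd : nodeDepth (tnB.1 : ℕ) = nodeDepth s := by rw [← this.1, hsn0]
        omega
      have htBd : nodeDepth s < nodeDepth (tnB.1 : ℕ) := by omega
      rcases Nat.lt_or_ge k₀ jst with hjgt | hjge
      · exact reentry_contra C hs2 hIs hQ h0q hv0 hsn0 hx0 hk₀q hk₀1 hk₀bad hjq hjgt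
          hjgood hjdepth
      -- now jst < k₀ : prefix analysis
      have hjlt : jst < k₀ := by omega
      set inK : ℕ → Prop := fun k' => ∃ hk' : k' < q, ∃ x', v ⟨k', hk'⟩ = Sum.inl (tnB, x')
        with hinKdef
      have hinK0 : ¬ inK 0 := by
        rintro ⟨hk', x', he⟩
        rw [vcast v hk' h0q rfl, hv0] at he
        have : sn0 = tnB := congrArg Prod.fst (Sum.inl.inj he)
        have hdd : nodeDepth (tnB.1 : ℕ) = nodeDepth s := by rw [← this, hsn0]
        omega
      set k := Nat.findGreatest (fun k' => ¬ inK k') (k₀ - 1) with hkdef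
      have hknot : ¬ inK k := Nat.findGreatest_spec (P := fun k' => ¬ inK k') (m := 0) (by omega) hinK0
      have hkle : k ≤ k₀ - 1 := Nat.findGreatest_le _
      have hinKk₀1 : inK (k₀ - 1) := ⟨hk₁q, xB, hvk1⟩
      have hklt : k < k₀ - 1 := by
        rcases Nat.lt_or_ge k (k₀ - 1) with h | h
        · exact h
        · exact absurd (by rw [show k₀ - 1 = k by omega] at hinKk₀1; exact hinKk₀1) hknot
      have hbetween : ∀ k', k < k' → k' ≤ k₀ - 1 → inK k' := by
        intro k' h1 h2
        by_contra hng
        exact (Nat.findGreatest_is_greatest h1 h2) hng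
      have hk1q' : k + 1 < q := by omega
      obtain ⟨hkk, x₁, hvsucc⟩ := hbetween (k + 1) (by omega) (by omega)
      have hvsucc' : v ⟨k + 1, hk1q'⟩ = Sum.inl (tnB, x₁) := hvsucc
      have hkq : k < q := by omega
      have hgk : GoodD ℓ s D (v ⟨k, hkq⟩) := good_before k (by omega) hkq
      have hadjk2 : (Gl C).Adj (v ⟨k, hkq⟩) (Sum.inl (tnB, x₁)) := by
        have := hQ.1.2 ⟨k, hkq⟩ ⟨k + 1, hk1q'⟩ rfl
        rw [hvsucc'] at this
        exact this
      rcases nbrs_leafclique C hs1 hIs hancB hdB hgk hadjk2 with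
        ⟨x', hvk'⟩ | ⟨tnn, jy, htnn, hjy, hvk'⟩
      · exact hknot ⟨hkq, x', hvk'⟩
      -- v k = y_b ∈ bpred(tnB)
      have hancn : anc s (tnn.1 : ℕ) := by rw [htnn]; exact hancB
      have hdn : nodeDepth (tnn.1 : ℕ) = D := by rw [htnn]; exact hdB
      have htnne : (tnn.1 : ℕ) ≠ s := by
        intro he
        rw [he] at hdn
        omega
      -- final contradiction via the witness jst, given the prefix shape:
      -- 0 (or 0,1) at K^s, then pred(tnB), then K^{tnB} up to k₀-1
      have prefix_contra :
          (∀ j', 1 ≤ j' → j' < k → ∀ hj' : j' < q,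
            πn (v ⟨j', hj'⟩) = (tnn.1 : ℕ) ∨ πn (v ⟨j', hj'⟩) = s) → False := by
        intro hmid
        rcases Nat.eq_zero_or_pos jst with hj0 | hj1
        · rw [vcast v hjq h0q hj0, hv0] at hdsj
          simp only [πn] at hdsj
          rw [hsn0] at hdsj
          omega
        rcases Nat.lt_or_ge jst k with hjk | hjk
        · rcases hmid jst hj1 hjk hjq with he | he
          · rw [he] at hjdepth
            omega
          · rw [he] at hdsj
            omega
        rcases Nat.eq_or_lt_of_le hjk with hje | hjgt2
        · -- jst = k : depth D
          rw [vcast v hjq hkq hje.symm, hvk'] at hjdepth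
          simp only [πn] at hjdepth
          omega
        · -- jst > k : inK jst
          obtain ⟨hj', x'', hvj⟩ := hbetween jst hjgt2 (by omega)
          have hvj' : v ⟨jst, hjq⟩ = Sum.inl (tnB, x'') := hvj
          rw [hvj'] at hjdepth
          simp only [πn] at hjdepth
          omega
      by_cases hbx : x0 = other (topIdx C.toBUChoices s) (! C.ρ s (tnn.1 : ℕ))
      · -- v 0 rib-adjacent to v k : k = 1
        have hadj0 : (Gl C).Adj (v ⟨0, h0q⟩) (v ⟨k, hkq⟩) := by
          rw [hv0, hvk', hbx]
          exact rib_adj C hs1 hIs hancn htnne hdn sn0 hsn0 jy (! C.ρ s (tnn.1 : ℕ))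
            (Or.inr ⟨hjy, rfl⟩)
        have hk1 : k = 1 := ipath_first hQ h0q hkq hadj0
        exact prefix_contra (by intro j' h1 h2 _; omega)
      · have hbx' : x0 = other (topIdx C.toBUChoices s) (C.ρ s (tnn.1 : ℕ)) := by
          have := not_other_of_ne (topIdx C.toBUChoices s) x0 (! C.ρ s (tnn.1 : ℕ)) hx0 hbx
          simpa using this
        have hkge1 : 1 ≤ k := by
          by_contra hcon
          have h0 : k = 0 := by omega
          rw [vcast v hkq h0q h0, hv0] at hvk'
          simp at hvk'
        have hk1q2 : k - 1 < q := by omega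
        have hadjprev : (Gl C).Adj (v ⟨k - 1, hk1q2⟩) (Sum.inr (tnn, jy)) := by
          have := hQ.1.2 ⟨k - 1, hk1q2⟩ ⟨k, hkq⟩ (show k = k - 1 + 1 by omega)
          rw [hvk'] at this
          exact this
        rcases nbrs_bpred C hs1 hIs hjy hancn hdn hsn0 hadjprev with
          ⟨tnT, htnT, hvprev⟩ | hvprev | hvprev
        · -- v (k-1) is the unique clique neighbor of v k in K^{tnB};
          -- but so is v (k+1) : contradiction with injectivity
          have hadjnext : (Gl C).Adj (v ⟨k + 1, hk1q'⟩) (Sum.inr (tnn, jy)) := by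
            have := hQ.1.2 ⟨k, hkq⟩ ⟨k + 1, hk1q'⟩ rfl
            rw [hvk'] at this
            exact this.symm
          rcases nbrs_bpred C hs1 hIs hjy hancn hdn hsn0 hadjnext with
            ⟨tnT2, htnT2, hvnext⟩ | hvnext | hvnext
          · have : tnT2 = tnT := tnode_ext (by rw [htnT, htnT2])
            rw [this] at hvnext
            have heq : (⟨k - 1, hk1q2⟩ : Fin q) = ⟨k + 1, hk1q'⟩ :=
              hQ.1.1 (hvprev.trans hvnext.symm)
            have h2 : k - 1 = k + 1 := congrArg Fin.val heq
            omega
          · rw [hvsucc'] at hvnext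
            simp at hvnext
          · rw [hvsucc'] at hvnext
            have : tnB = sn0 := congrArg Prod.fst (Sum.inl.inj hvnext)
            have hdd : nodeDepth (tnB.1 : ℕ) = nodeDepth s := by rw [this, hsn0]
            omega
        · -- v (k-1) = x_b, rib-adjacent to v 0 : k = 2
          have hadj0 : (Gl C).Adj (v ⟨0, h0q⟩) (v ⟨k - 1, hk1q2⟩) := by
            rw [hv0, hvprev, hbx']
            refine rib_adj C hs1 hIs hancn htnne hdn sn0 hsn0 (jy - 1) (C.ρ s (tnn.1 : ℕ))
              (Or.inl ⟨?_, rfl⟩)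
            rcases hjy with rfl | rfl
            · exact Or.inl rfl
            · exact Or.inr rfl
          have : k - 1 = 1 := ipath_first hQ h0q hk1q2 hadj0
          refine prefix_contra ?_
          intro j' h1 h2 hj'
          have hj1 : j' = 1 := by omega
          left
          rw [vcast v hj' hk1q2 (by omega), hvprev]
          rfl
        · -- v (k-1) is a top edge vertex of K^s : k - 1 ≤ 1
          have hk11 : k - 1 ≤ 1 := top_index hQ h0q hv0 hsn0 hk1q2 hvprev hsn0
          have hk1ne0 : k - 1 ≠ 0 := by
            intro h0
            rw [vcast v hk1q2 h0q h0, hv0] at hvprev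
            have : x0 = other (topIdx C.toBUChoices s) (! C.ρ s (tnn.1 : ℕ)) :=
              congrArg Prod.snd (Sum.inl.inj hvprev)
            exact hbx this
          have hk2 : k = 2 := by omega
          refine prefix_contra ?_
          intro j' h1 h2 hj'
          have hj1 : j' = 1 := by omega
          right
          rw [vcast v hj' hk1q2 (by omega), hvprev]
          exact hsn0

end PaperDefs

namespace PaperDefs

/-- For every `ℓ ≥ 1`, if `Q = v₁…v_q` is an induced path of `G_ℓ` whose first
vertex is an endpoint of the top edge of `K^s` for a source `s` (of rank `a`) of
`B_ℓ`, and `s` is `Q`-special, then `V(Q) ⊆ V(G_ℓ(s)) \ pred(s)`. -/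
theorem statement15 :
    ∀ ℓ : ℕ, 1 ≤ ℓ → ∀ C : GChoices ℓ, ∀ q : ℕ, ∀ hq : 1 ≤ q,
      ∀ v : Fin q → BV (h ℓ), IsInducedPathSeq (Gl C) v →
        ∀ s a : ℕ, IsSourceOfRank ℓ s a →
          TopEdgeVert C s (v ⟨0, hq⟩) →
          QSpecial C v s →
          ∀ i : Fin q, SubtreeNode ℓ s a (πn (v i)) ∧ ¬ InPred s (v i) :=
  statement15'

end PaperDefs
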